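/- arXiv:1409.4825 — 4 statements merged into one kernel-verified Lean document; each statement's English description precedes it below -/
import Mathlib

section
/- The pairing is Frobenius with respect to the Gerstenhaber product: for α ∈ W_p, β ∈ W_q, γ ∈ W_r, ⟨α · β, γ⟩ = ⟨α, β · γ⟩. -/
/-- Hochschild cochains `W_n = Hom_k(k[G]^{⊗(n+1)}, k)`, identified with functions on
basis tuples of group elements. -/
abbrev W (k G : Type) (n : ℕ) : Type := (Fin (n + 1) → G) → k

/-- The Gerstenhaber (convolution) product on Hochschild cochains:
`(α · β)(g_0, g_1, …, g_{p+q}) = Σ_{h ∈ G} α(h, g_1, …, g_p) β(g_0 h⁻¹, g_{p+1}, …, g_{p+q})`. -/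
def gprod (k G : Type) [CommRing k] [Group G] [Fintype G] (p q : ℕ)
    (α : W k G p) (β : W k G q) : W k G (p + q) := fun σ =>
  ∑ h : G,
    α (Fin.cases (motive := fun _ => G) h
        (fun j : Fin p => σ ⟨j.1 + 1, by have := j.isLt; omega⟩)) *
    β (Fin.cases (motive := fun _ => G) (σ 0 * h⁻¹)
        (fun j : Fin q => σ ⟨p + j.1 + 1, by have := j.isLt; omega⟩))


/-- Evaluation `α(h, N, …, N)` of a cochain with the norm element `N = Σ_{g ∈ G} g` in
every slot after the first: by multilinearity this is the sum over all tuples. -/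
def normEval (k G : Type) [CommRing k] [Group G] [Fintype G] (p : ℕ)
    (α : W k G p) (h : G) : k :=
  ∑ τ : Fin p → G, α (Fin.cases (motive := fun _ => G) h τ)


lemma sum_split (k G : Type) [CommRing k] [Fintype G] (p q : ℕ)
    (f : (Fin p → G) → k) (g : (Fin q → G) → k) :
    (∑ σ : Fin p → G, f σ) * (∑ ρ : Fin q → G, g ρ)
      = ∑ τ : Fin (p + q) → G,
          f (fun j => τ (Fin.castAdd q j)) * g (fun j => τ (Fin.natAdd p j)) := by
  rw [Finset.sum_mul_sum]
  rw [← Fintype.sum_prod_type']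
  apply Fintype.sum_equiv ((Equiv.sumArrowEquivProdArrow _ _ G).symm.trans
    (Equiv.arrowCongr finSumFinEquiv (Equiv.refl G)))
  rintro ⟨σ, ρ⟩
  simp [Equiv.sumArrowEquivProdArrow, Equiv.arrowCongr]

lemma normEval_gprod (k G : Type) [CommRing k] [Group G] [Fintype G] (p q : ℕ)
    (α : W k G p) (β : W k G q) (h : G) :
    normEval k G (p + q) (gprod k G p q α β) h
      = ∑ h' : G, normEval k G p α h' * normEval k G q β (h * h'⁻¹) := by
  unfold normEval gprod
  rw [Finset.sum_comm]
  refine Finset.sum_congr rfl fun h' _ => ?_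
  rw [sum_split]
  refine Finset.sum_congr rfl fun τ _ => ?_
  refine congrArg₂ (· * ·) (congrArg α (funext fun i => ?_)) (congrArg β (funext fun i => ?_))
  · refine Fin.cases rfl (fun j => ?_) i
    simp only [Fin.cases_succ]
    show Fin.cases (motive := fun _ => G) h τ (Fin.succ (Fin.castAdd q j)) = _
    rw [Fin.cases_succ]
  · refine Fin.cases ?_ (fun j => ?_) i
    · simp only [Fin.cases_zero]
    · simp only [Fin.cases_succ]
      show Fin.cases (motive := fun _ => G) h τ (Fin.succ (Fin.natAdd p j)) = _
      rw [Fin.cases_succ]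

/-- The pairing `⟨α, β⟩ = Σ_{h ∈ G} α(h, N, …, N) β(h⁻¹, N, …, N)`. -/
def pairW (k G : Type) [CommRing k] [Group G] [Fintype G] {p q : ℕ}
    (α : W k G p) (β : W k G q) : k :=
  ∑ h : G, normEval k G p α h * normEval k G q β h⁻¹

/-- The pairing is Frobenius with respect to the Gerstenhaber (convolution) product:
`⟨α · β, γ⟩ = ⟨α, β · γ⟩`. -/
theorem pairW_frobenius (k G : Type) [Field k] [Group G] [Fintype G] (p q r : ℕ)
    (α : W k G p) (β : W k G q) (γ : W k G r) :
    pairW k G (gprod k G p q α β) γ = pairW k G α (gprod k G q r β γ) := by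
  unfold pairW
  simp only [normEval_gprod, Finset.sum_mul, Finset.mul_sum, ← Fintype.sum_prod_type']
  apply Fintype.sum_equiv (Equiv.mk (fun ab : G × G => (ab.2, ab.1 * ab.2⁻¹))
    (fun hc : G × G => (hc.2 * hc.1, hc.1)) (by intro x; simp) (by intro x; simp))
  rintro ⟨a, b⟩
  simp only [Equiv.coe_fn_mk]
  simp only [mul_inv_rev, inv_inv, inv_mul_cancel_left]
  ring
end

section
/- If p and q are both odd, the pairing descends to Hochschild cohomology: if α ∈ W_p and β ∈ W_q are b*-cocycles and γ ∈ Hom_k(k[G]^{⊗p}, k) is any cochain, then ⟨α + b*(γ), β⟩ = ⟨α, β⟩. In particular b*(γ)(h, N, ..., N) = 0 for all h ∈ G when p is odd. -/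
/-- The `i`-th Hochschild face map on tuples: for `i ≤ n` it multiplies adjacent entries
`a_i a_{i+1}`, and for `i = n+1` it forms `(a_{n+1} a_0, a_1, …, a_n)`. -/
def hface (G : Type) [Group G] (n : ℕ) (i : Fin (n + 2)) (σ : Fin (n + 2) → G) :
    Fin (n + 1) → G := fun j =>
  if (i : ℕ) = n + 1 then
    if (j : ℕ) = 0 then σ (Fin.last (n + 1)) * σ 0 else σ j.castSucc
  else
    if (j : ℕ) < (i : ℕ) then σ j.castSucc
    else if (j : ℕ) = (i : ℕ) then σ j.castSucc * σ j.succ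
    else σ j.succ

/-- The Hochschild coboundary `b* : W_n → W_{n+1}`, dual to the Hochschild boundary `b`. -/
def cbW (k G : Type) [CommRing k] [Group G] (n : ℕ) (α : W k G n) : W k G (n + 1) :=
  fun σ => ∑ i : Fin (n + 2), (-1 : k) ^ (i : ℕ) * α (hface G n i σ)

section Aux
variable {G : Type} [Group G]

lemma cases_castSucc {n : ℕ} (h : G) (τ : Fin (n+1) → G) (j : Fin (n+1)) :
    (Fin.cases (motive := fun _ => G) h τ) j.castSucc =
      if hj : (j:ℕ) = 0 then h else τ ⟨(j:ℕ)-1, by omega⟩ := by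
  cases j using Fin.cases with
  | zero => simp
  | succ j' =>
    rw [← Fin.succ_castSucc, Fin.cases_succ]
    rw [dif_neg (by simp)]
    exact congrArg τ (Fin.ext (by simp))

lemma cases_last {n : ℕ} (h : G) (τ : Fin (n+1) → G) :
    (Fin.cases (motive := fun _ => G) h τ) (Fin.last (n+1)) = τ (Fin.last n) := by
  have : Fin.last (n+1) = (Fin.last n).succ := by ext; simp
  rw [this, Fin.cases_succ]

end Aux

section Mid
variable {G : Type} [Group G]

def emid (n i : ℕ) (h2 : i + 1 ≤ n) (τ : Fin (n+1) → G) : Fin (n+1) → G := fun j =>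
  if (j:ℕ) + 1 = i then τ j * τ ⟨i, by omega⟩
  else if (j:ℕ) = i + 1 then (τ ⟨i, by omega⟩)⁻¹ * τ j
  else τ j

lemma hface_mid (n i : ℕ) (h1 : 1 ≤ i) (h2 : i + 1 ≤ n) (h : G) (τ : Fin (n+1) → G) :
    hface G n ⟨i+1, by omega⟩ (Fin.cases h (emid n i h2 τ)) =
    hface G n ⟨i, by omega⟩ (Fin.cases h τ) := by
  funext j
  rcases j with ⟨jv, hj⟩
  simp only [hface, emid, cases_castSucc, Fin.cases_succ, Fin.val_mk]
  split_ifs <;> try omega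
  all_goals try rfl
  · congr 1
    exact congrArg τ (Fin.ext (by simp; omega))
  · rw [show (⟨jv - 1, by omega⟩ : Fin (n+1)) = ⟨i, by omega⟩ from by apply Fin.ext; simp; omega]
    exact mul_inv_cancel_left _ _

def emidEquiv (n i : ℕ) (h2 : i + 1 ≤ n) : (Fin (n+1) → G) ≃ (Fin (n+1) → G) where
  toFun := emid n i h2
  invFun τ := fun j =>
    if (j:ℕ) + 1 = i then τ j * (τ ⟨i, by omega⟩)⁻¹
    else if (j:ℕ) = i + 1 then τ ⟨i, by omega⟩ * τ j
    else τ j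
  left_inv τ := by
    funext j
    rcases j with ⟨jv, hj⟩
    simp only [emid, Fin.val_mk]
    split_ifs <;> try omega
    all_goals try rfl
    all_goals simp_all
  right_inv τ := by
    funext j
    rcases j with ⟨jv, hj⟩
    simp only [emid, Fin.val_mk]
    split_ifs <;> try omega
    all_goals try rfl
    all_goals simp_all

def elast (n : ℕ) (h : G) (τ : Fin (n+1) → G) : Fin (n+1) → G := fun j =>
  if hjn : (j:ℕ) = n then h * τ 0 * h⁻¹ else τ ⟨(j:ℕ)+1, by omega⟩

lemma hface_last (n : ℕ) (h : G) (τ : Fin (n+1) → G) :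
    hface G n (Fin.last (n+1)) (Fin.cases h (elast n h τ)) =
    hface G n 0 (Fin.cases h τ) := by
  funext j
  rcases j with ⟨jv, hj⟩
  simp only [hface, elast, cases_castSucc, cases_last, Fin.cases_succ, Fin.cases_zero,
    Fin.val_mk, Fin.val_last, Fin.val_zero]
  split_ifs <;> try omega
  all_goals try rfl
  all_goals first
    | rfl
    | exact False.elim ‹False›
    | exact congrArg τ (Fin.ext (by simp; omega))
    | (rw [show τ 0 = τ ⟨jv, hj⟩ from congrArg τ (Fin.ext (by simp; omega))]; group)
    | (rw [show τ ⟨n, by omega⟩ = τ ⟨jv, hj⟩ from congrArg τ (Fin.ext (by simp; omega))]; group)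
    | (rw [mul_assoc, inv_mul_cancel, mul_one]
       exact congrArg (h * ·) (congrArg τ (Fin.ext (by simp; omega))))
    | (exfalso; simp_all)

def elastEquiv (n : ℕ) (h : G) : (Fin (n+1) → G) ≃ (Fin (n+1) → G) where
  toFun := elast n h
  invFun τ := fun j => if (j:ℕ) = 0 then h⁻¹ * τ ⟨n, by omega⟩ * h else τ ⟨(j:ℕ)-1, by omega⟩
  left_inv τ := by
    funext j
    rcases j with ⟨jv, hj⟩
    simp only [elast, Fin.val_mk]
    split_ifs <;> try omega
    all_goals try rfl
    all_goals first
    | rfl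
    | exact False.elim ‹False›
    | exact congrArg τ (Fin.ext (by simp; omega))
    | (rw [show τ 0 = τ ⟨jv, hj⟩ from congrArg τ (Fin.ext (by simp; omega))]; group)
    | (rw [show τ ⟨n, by omega⟩ = τ ⟨jv, hj⟩ from congrArg τ (Fin.ext (by simp; omega))]; group)
    | (rw [mul_assoc, inv_mul_cancel, mul_one]
       exact congrArg (h * ·) (congrArg τ (Fin.ext (by simp; omega))))
    | (exfalso; simp_all)
  right_inv τ := by
    funext j
    rcases j with ⟨jv, hj⟩
    simp only [elast, Fin.val_mk]
    split_ifs <;> try omega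
    all_goals try rfl
    all_goals first
    | rfl
    | exact False.elim ‹False›
    | exact congrArg τ (Fin.ext (by simp; omega))
    | (rw [show τ 0 = τ ⟨jv, hj⟩ from congrArg τ (Fin.ext (by simp; omega))]; group)
    | (rw [show τ ⟨n, by omega⟩ = τ ⟨jv, hj⟩ from congrArg τ (Fin.ext (by simp; omega))]; group)
    | (rw [mul_assoc, inv_mul_cancel, mul_one]
       exact congrArg (h * ·) (congrArg τ (Fin.ext (by simp; omega))))
    | (exfalso; simp_all)

end Mid

section Main
variable (k : Type) [CommRing k] {G : Type} [Group G] [Fintype G]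

def SS (n : ℕ) (γ : W k G n) (h : G) (i : Fin (n+2)) : k :=
  ∑ τ : Fin (n+1) → G, γ (hface G n i (Fin.cases (motive := fun _ => G) h τ))

lemma SS_mid (n i : ℕ) (h1 : 1 ≤ i) (h2 : i + 1 ≤ n) (γ : W k G n) (h : G) :
    SS k n γ h ⟨i, by omega⟩ = SS k n γ h ⟨i+1, by omega⟩ := by
  refine Fintype.sum_equiv (emidEquiv n i h2) _ _ fun τ => ?_
  exact congrArg γ (hface_mid n i h1 h2 h τ).symm

lemma SS_last (n : ℕ) (γ : W k G n) (h : G) :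
    SS k n γ h 0 = SS k n γ h (Fin.last (n+1)) := by
  refine Fintype.sum_equiv (elastEquiv n h) _ _ fun τ => ?_
  exact congrArg γ (hface_last n h τ).symm

def iota (n : ℕ) (i : Fin (n+2)) : Fin (n+2) :=
  if h0 : (i:ℕ) = 0 then Fin.last (n+1)
  else if h1 : (i:ℕ) = n+1 then 0
  else if (i:ℕ) % 2 = 1 then ⟨(i:ℕ)+1, by have := i.isLt; omega⟩
  else ⟨(i:ℕ)-1, by have := i.isLt; omega⟩

lemma normEval_cb (n m : ℕ) (hn : n = 2*m) (γ : W k G n) (h : G) :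
    normEval k G (n+1) (cbW k G n γ) h = 0 := by
  have key : normEval k G (n+1) (cbW k G n γ) h
      = ∑ i : Fin (n+2), (-1:k)^(i:ℕ) * SS k n γ h i := by
    unfold normEval cbW SS
    rw [Finset.sum_comm]
    exact Finset.sum_congr rfl fun i _ => (Finset.mul_sum _ _ _).symm
  rw [key]
  refine Finset.sum_involution (fun i _ => iota n i) ?_ ?_ (fun i _ => Finset.mem_univ _) ?_
  · intro i _
    unfold iota
    split_ifs with hi0 hin hodd
    · rw [show i = 0 from Fin.ext hi0]
      rw [SS_last k n γ h]
      have : ((-1:k))^((Fin.last (n+1) : Fin (n+2)) : ℕ) = -1 := by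
        rw [Fin.val_last]
        exact Odd.neg_one_pow ⟨m, by omega⟩
      rw [this]
      simp
    · rw [show i = Fin.last (n+1) from Fin.ext (by simpa using hin)]
      rw [← SS_last k n γ h]
      have : ((-1:k))^((Fin.last (n+1) : Fin (n+2)) : ℕ) = -1 := by
        rw [Fin.val_last]
        exact Odd.neg_one_pow ⟨m, by omega⟩
      rw [this]
      simp
    · have h1 : 1 ≤ (i:ℕ) := by omega
      have h2 : (i:ℕ) + 1 ≤ n := by have := i.isLt; omega
      have h2' : (i:ℕ)+1 < n+2 := by omega
      rw [show SS k n γ h i = SS k n γ h ⟨(i:ℕ)+1, h2'⟩ from SS_mid k n (i:ℕ) h1 h2 γ h]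
      simp [pow_succ]
    · have h1 : 1 ≤ (i:ℕ) - 1 := by omega
      have h2 : ((i:ℕ) - 1) + 1 ≤ n := by have := i.isLt; omega
      have e := SS_mid k n ((i:ℕ)-1) h1 h2 γ h
      rw [show SS k n γ h ⟨(i:ℕ)-1, by have := i.isLt; omega⟩
            = SS k n γ h ⟨(i:ℕ)-1+1, by have := i.isLt; omega⟩ from e]
      rw [show SS k n γ h i = SS k n γ h ⟨(i:ℕ)-1+1, by have := i.isLt; omega⟩ from
        congrArg (SS k n γ h) (Fin.ext (by simp; omega))]
      have hsign : ((-1:k))^((i:ℕ)-1) = -(-1:k)^(i:ℕ) := by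
        have : (i:ℕ) = ((i:ℕ)-1)+1 := by omega
        rw [this]; simp [pow_succ]
      simp [hsign]
  · intro i _ _
    unfold iota
    split_ifs <;> intro heq <;> (have h' := congrArg Fin.val heq) <;> simp at h' <;> omega
  · intro i _
    apply Fin.ext
    unfold iota
    split_ifs <;> first
      | omega
      | (simp only [Fin.val_last, Fin.val_zero, Fin.val_mk] at *; omega)
      | (exfalso; simp_all)
      | simp_all

end Main

/-- For `p = 2m+1` and `q = 2m'+1` both odd, the pairing descends to cohomology:
for cocycles `α ∈ W_p`, `β ∈ W_q` and any cochain `γ ∈ Hom_k(k[G]^{⊗p}, k) = W_{p-1}`,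
`⟨α + b*(γ), β⟩ = ⟨α, β⟩`; in particular `b*(γ)(h, N, …, N) = 0` for all `h ∈ G`. -/
theorem pairW_descends_odd_odd (k G : Type) [Field k] [Group G] [Fintype G] (m m' : ℕ)
    (α : W k G (2 * m + 1)) (β : W k G (2 * m' + 1)) (γ : W k G (2 * m))
    (hα : cbW k G (2 * m + 1) α = 0) (hβ : cbW k G (2 * m' + 1) β = 0) :
    pairW k G (α + cbW k G (2 * m) γ) β = pairW k G α β ∧
      ∀ h : G, normEval k G (2 * m + 1) (cbW k G (2 * m) γ) h = 0 := by
  have hz : ∀ h : G, normEval k G (2*m+1) (cbW k G (2*m) γ) h = 0 :=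
    fun h => normEval_cb k (2*m) m rfl γ h
  constructor
  · unfold pairW
    refine Finset.sum_congr rfl fun h _ => ?_
    congr 1
    have hadd : normEval k G (2*m+1) (α + cbW k G (2*m) γ) h
        = normEval k G (2*m+1) α h + normEval k G (2*m+1) (cbW k G (2*m) γ) h := by
      unfold normEval
      rw [← Finset.sum_add_distrib]
      rfl
    rw [hadd, hz h, add_zero]
  · exact hz
end

section
/- If p is even and q is odd, and β ∈ W_q is a b*-cocycle, then ⟨b*(γ), β⟩ = 0 for every cochain γ ∈ Hom_k(k[G]^{⊗p}, k); hence the pairing is well defined on cohomology classes in this case. -/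
/-!
Evaluate `b*γ` at `(h, N, …, N)`. The two outer faces each give `γ(N, …, N)`, since left or
right translation by `h` permutes `G`; each inner face multiplies two copies of `N`, and
`N² = νN` gives `ν γ(h, N, …, N)`. For `p` even the signs of the inner faces add up to `-1`,
so `b*γ(h, N, …, N) = 2 γ(N, …, N) - ν γ(h, N, …, N)`. For the cocycle `β` this reads
`ν β(h, N, …, N) = 2 β(N, …, N)`, and then both terms of `⟨b*γ, β⟩` equal
`2 γ(N, …, N) β(N, …, N)`.
-/

section TupleSums

variable {G M : Type} [Fintype G] [AddCommMonoid M]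

theorem sum_pi_fin_succ_cons (n : ℕ) (f : (Fin (n + 1) → G) → M) :
    ∑ τ, f τ = ∑ g : G, ∑ τ : Fin n → G, f (Fin.cons g τ) := by
  rw [← (Fin.consEquiv fun _ => G).sum_comp, Fintype.sum_prod_type]
  rfl

theorem sum_pi_fin_succ_snoc (n : ℕ) (f : (Fin (n + 1) → G) → M) :
    ∑ τ, f τ = ∑ g : G, ∑ τ : Fin n → G, f (Fin.snoc τ g) := by
  rw [← (Fin.snocEquiv fun _ => G).sum_comp, Fintype.sum_prod_type]
  rfl

theorem sum_removeNth {n : ℕ} (p : Fin (n + 1)) (f : (Fin n → G) → M) :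
    ∑ τ : Fin (n + 1) → G, f (p.removeNth τ) = Fintype.card G • ∑ μ, f μ := by
  rw [← (Fin.insertNthEquiv (fun _ => G) p).sum_comp, Fintype.sum_prod_type]
  simp [Fin.insertNthEquiv, Fin.removeNth_insertNth]

theorem sum_update_inv_mul [Group G] {ι : Type} [Fintype ι] [DecidableEq ι] {p q : ι}
    (hpq : p ≠ q) (f : (ι → G) → M) :
    ∑ τ : ι → G, f (Function.update τ q ((τ p)⁻¹ * τ q)) = ∑ τ, f τ := by
  let e : (ι → G) ≃ (ι → G) :=
    { toFun := fun τ => Function.update τ q ((τ p)⁻¹ * τ q)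
      invFun := fun σ => Function.update σ q (σ p * σ q)
      left_inv := fun τ => by ext j; by_cases hj : j = q <;> simp [hj, hpq]
      right_inv := fun σ => by ext j; by_cases hj : j = q <;> simp [hj, hpq] }
  exact e.sum_comp f

end TupleSums

section Faces

variable {G : Type} [Group G]

theorem hface_zero_cons_cons (n : ℕ) (h g : G) (τ : Fin n → G) :
    hface G n 0 (Fin.cons h (Fin.cons g τ)) = Fin.cons (h * g) τ := by
  ext j
  cases j using Fin.cases <;> simp [hface]

theorem hface_last_cons_snoc (n : ℕ) (h g : G) (τ : Fin n → G) :
    hface G n (Fin.last (n + 1)) (Fin.cons h (Fin.snoc τ g)) = Fin.cons (g * h) τ := by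
  ext j
  cases j using Fin.cases with
  | zero => simp [hface, ← Fin.succ_last]
  | succ j => simp [hface]

theorem hface_inner_cons_update (n : ℕ) (p : Fin n) (h : G) (τ : Fin (n + 1) → G) :
    hface G n p.castSucc.succ
        (Fin.cons h (Function.update τ p.succ ((τ p.castSucc)⁻¹ * τ p.succ)))
      = Fin.cons h (p.castSucc.removeNth τ) := by
  have hp := p.isLt
  ext j
  cases j using Fin.cases with
  | zero => simp [hface]; omega
  | succ j =>
    simp only [hface, Fin.val_succ, Fin.val_castSucc, Fin.removeNth, ← Fin.succ_castSucc,
      Fin.cons_succ]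
    rw [if_neg (by omega)]
    rcases lt_trichotomy j p with hjp | rfl | hpj
    · have hne : j.castSucc ≠ p.succ := (Fin.castSucc_lt_succ_iff.2 hjp.le).ne
      rw [if_pos (by simpa using hjp), Function.update_of_ne hne,
        Fin.succAbove_castSucc_of_lt _ _ hjp]
    · rw [if_neg (by omega), if_pos rfl, Function.update_of_ne Fin.castSucc_lt_succ.ne,
        Function.update_self, Fin.succAbove_castSucc_self, mul_inv_cancel_left]
    · have hne : j.succ ≠ p.succ := fun h => hpj.ne' (Fin.succ_injective _ h)
      rw [if_neg (by simp; omega), if_neg (by simp; omega), Function.update_of_ne hne,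
        Fin.succAbove_castSucc_of_le _ _ hpj.le]

end Faces

section Cochains

variable {k G : Type} [CommRing k] [Group G] [Fintype G]

theorem sum_normEval (n : ℕ) (α : W k G n) : ∑ h, normEval k G n α h = ∑ σ, α σ :=
  (sum_pi_fin_succ_cons n α).symm

theorem normEval_zero (n : ℕ) (h : G) : normEval k G n 0 h = 0 := by
  simp [normEval]

theorem normEval_cbW_eq_sum_faces (n : ℕ) (α : W k G n) (h : G) :
    normEval k G (n + 1) (cbW k G n α) h
      = ∑ i : Fin (n + 2),
          (-1 : k) ^ (i : ℕ) * ∑ τ : Fin (n + 1) → G, α (hface G n i (Fin.cons h τ)) := by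
  simp only [normEval, cbW, Finset.mul_sum]
  exact Finset.sum_comm

theorem sum_hface_zero (n : ℕ) (α : W k G n) (h : G) :
    ∑ τ : Fin (n + 1) → G, α (hface G n 0 (Fin.cons h τ)) = ∑ σ, α σ := by
  simp only [sum_pi_fin_succ_cons n, hface_zero_cons_cons]
  exact Equiv.sum_comp (Equiv.mulLeft h) fun g => ∑ τ : Fin n → G, α (Fin.cons g τ)

theorem sum_hface_last (n : ℕ) (α : W k G n) (h : G) :
    ∑ τ : Fin (n + 1) → G, α (hface G n (Fin.last (n + 1)) (Fin.cons h τ)) = ∑ σ, α σ := by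
  rw [sum_pi_fin_succ_snoc n, sum_pi_fin_succ_cons n α]
  simp only [hface_last_cons_snoc]
  exact Equiv.sum_comp (Equiv.mulRight h) fun g => ∑ τ : Fin n → G, α (Fin.cons g τ)

theorem sum_hface_inner (n : ℕ) (p : Fin n) (α : W k G n) (h : G) :
    ∑ τ : Fin (n + 1) → G, α (hface G n p.castSucc.succ (Fin.cons h τ))
      = Fintype.card G * normEval k G n α h := by
  rw [← sum_update_inv_mul (Fin.castSucc_lt_succ (i := p)).ne]
  simp only [hface_inner_cons_update]
  rw [sum_removeNth p.castSucc fun μ => α (Fin.cons h μ), nsmul_eq_mul]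
  rfl

theorem normEval_cbW (n : ℕ) (α : W k G n) (h : G) :
    normEval k G (n + 1) (cbW k G n α) h
      = (1 + (-1) ^ (n + 1)) * ∑ σ, α σ
        - (∑ i ∈ Finset.range n, (-1 : k) ^ i) * (Fintype.card G * normEval k G n α h) := by
  rw [normEval_cbW_eq_sum_faces, Fin.sum_univ_succ, Fin.sum_univ_castSucc]
  simp only [sum_hface_zero, sum_hface_inner, Fin.succ_last, sum_hface_last, Fin.val_zero,
    pow_zero, Fin.val_succ, Fin.val_castSucc, Fin.val_last, pow_succ, ← Finset.sum_mul]
  rw [Fin.sum_univ_eq_sum_range (fun i => (-1 : k) ^ i) n]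
  ring

theorem normEval_cbW_of_odd {n : ℕ} (hn : Odd n) (α : W k G n) (h : G) :
    normEval k G (n + 1) (cbW k G n α) h
      = 2 * ∑ σ, α σ - Fintype.card G * normEval k G n α h := by
  rw [normEval_cbW, neg_one_geom_sum, if_neg (Nat.not_even_iff_odd.2 hn),
    (hn.add_one).neg_one_pow]
  ring

theorem card_mul_normEval_of_cbW_eq_zero {n : ℕ} (hn : Odd n) {β : W k G n}
    (hβ : cbW k G n β = 0) (h : G) :
    Fintype.card G * normEval k G n β h = 2 * ∑ σ, β σ := by
  have := normEval_cbW_of_odd hn β h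
  rw [hβ, normEval_zero] at this
  linear_combination this

end Cochains

/-- For `p = 2m+2` even and `q = 2m'+1` odd, if `β ∈ W_q` is a `b*`-cocycle then
`⟨b*(γ), β⟩ = 0` for every cochain `γ ∈ Hom_k(k[G]^{⊗p}, k) = W_{p-1}`; hence the
pairing is well defined on cohomology classes in this case. -/
theorem pairW_descends_even_odd (k G : Type) [Field k] [Group G] [Fintype G] (m m' : ℕ)
    (β : W k G (2 * m' + 1)) (hβ : cbW k G (2 * m' + 1) β = 0)
    (γ : W k G (2 * m + 1)) :
    pairW k G (cbW k G (2 * m + 1) γ) β = 0 := by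
  have hterm : ∀ h : G, normEval k G _ (cbW k G _ γ) h * normEval k G _ β h⁻¹
      = 2 * (∑ σ, γ σ) * normEval k G _ β h⁻¹ - 2 * (∑ σ, β σ) * normEval k G _ γ h := by
    intro h
    rw [normEval_cbW_of_odd (odd_two_mul_add_one m)]
    linear_combination (-normEval k G _ γ h) *
      card_mul_normEval_of_cbW_eq_zero (odd_two_mul_add_one m') hβ h⁻¹
  rw [pairW, Finset.sum_congr rfl fun h _ => hterm h, Finset.sum_sub_distrib,
    ← Finset.mul_sum, ← Finset.mul_sum, sum_normEval,
    Fintype.sum_equiv (Equiv.inv G) (fun h => normEval k G _ β h⁻¹) (normEval k G _ β)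
      fun _ => rfl, sum_normEval]
  ring
end

section
/- On cochains supported on BG, the Gerstenhaber product equals the simplicial cup product: for α ∈ W_p(e) and β ∈ W_q(e), (α · β)(g_0, ..., g_{p+q}) = α(g_{p+1} g_{p+2} ⋯ g_{p+q} g_0, g_1, ..., g_p) β(g_0 g_1 ⋯ g_p, g_{p+1}, ..., g_{p+q}) for all g_0, ..., g_{p+q} ∈ G. -/
lemma prod_ofFn_cases {G : Type} [Monoid G] {n : ℕ} (h : G) (f : Fin n → G) :
    (List.ofFn (Fin.cases (motive := fun _ => G) h f)).prod = h * (List.ofFn f).prod := by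
  rw [List.ofFn_succ]
  simp

/-- On cochains supported on `BG`, the Gerstenhaber product equals the simplicial cup
product: `(α · β)(g_0,…,g_{p+q}) = α(g_{p+1} ⋯ g_{p+q} g_0, g_1,…,g_p) ·
β(g_0 g_1 ⋯ g_p, g_{p+1},…,g_{p+q})`. -/
theorem gprod_eq_simplicial_cup (k G : Type) [Field k] [Group G] [Fintype G] (p q : ℕ)
    (α : W k G p) (β : W k G q)
    (hα : ∀ σ : Fin (p + 1) → G, (List.ofFn σ).prod ≠ 1 → α σ = 0)
    (hβ : ∀ σ : Fin (q + 1) → G, (List.ofFn σ).prod ≠ 1 → β σ = 0) :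
    ∀ σ : Fin (p + q + 1) → G,
      gprod k G p q α β σ =
        α (Fin.cases (motive := fun _ => G)
            ((List.ofFn fun j : Fin q =>
                σ ⟨p + j.1 + 1, by have := j.isLt; omega⟩).prod * σ 0)
            (fun j : Fin p => σ ⟨j.1 + 1, by have := j.isLt; omega⟩)) *
          β (Fin.cases (motive := fun _ => G)
              ((List.ofFn fun j : Fin (p + 1) =>
                  σ (Fin.castLE (by omega) j)).prod)
              (fun j : Fin q => σ ⟨p + j.1 + 1, by have := j.isLt; omega⟩)) := by
  intro σ
  classical
  set Pf : Fin p → G := fun j : Fin p => σ ⟨j.1 + 1, by have := j.isLt; omega⟩ with hPf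
  set Qf : Fin q → G := fun j : Fin q => σ ⟨p + j.1 + 1, by have := j.isLt; omega⟩ with hQf
  set P : G := (List.ofFn Pf).prod with hP
  set Q : G := (List.ofFn Qf).prod with hQ
  have hfun : (fun j : Fin (p + 1) => σ (Fin.castLE (by omega : p + 1 ≤ p + q + 1) j))
      = Fin.cases (motive := fun _ => G) (σ 0) Pf := by
    funext j
    refine Fin.cases ?_ (fun i => ?_) j
    · rfl
    · rfl
  have hP' : (List.ofFn fun j : Fin (p + 1) => σ (Fin.castLE (by omega) j)).prod
      = σ 0 * P := by
    rw [hfun, prod_ofFn_cases, hP]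
  rw [gprod]
  rw [Finset.sum_eq_single (Q * σ 0)]
  · -- main term
    by_cases htot : Q * σ 0 * P = 1
    · have e0 : (Q * σ 0)⁻¹ = P := inv_eq_of_mul_eq_one_right htot
      rw [hP', e0]
    · have hαz : α (Fin.cases (motive := fun _ => G) (Q * σ 0) Pf) = 0 := by
        apply hα
        rw [prod_ofFn_cases]
        rw [← hP]
        simpa using htot
      rw [hαz, zero_mul, zero_mul]
  · intro h _ hne
    have hβz : β (Fin.cases (motive := fun _ => G) (σ 0 * h⁻¹) Qf) = 0 := by
      apply hβ
      rw [prod_ofFn_cases, ← hQ]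
      intro hcon
      apply hne
      have h1 : σ 0 * h⁻¹ = Q⁻¹ := eq_inv_of_mul_eq_one_left hcon
      have h2 := congrArg (fun x => Q * x * h) h1
      simpa [mul_assoc] using h2.symm
    rw [hβz, mul_zero]
  · intro hcon
    exact absurd (Finset.mem_univ _) hcon
end
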